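/- arXiv:2106.11211 — 5 statements merged into one kernel-verified Lean document; each statement's English description precedes it below -/
import Mathlib

section
/- Let (Ω, F, P) be a probability space with random variables X (covariates), Y (labels), and a binary indicator S. Define the propensity score e(X) := P(S = 1 | X). If (i) the conditional distribution of Y given X is the same on {S=1} and {S=0} (covariate shift assumption) and (ii) 0 < e(X) < 1 almost surely, then the conditional joint distribution of (X, Y) given e(X) on {S=1} equals the conditional joint distribution of (X, Y) given e(X) on {S=0}. -/
/-!
Under covariate shift both domains share the kernel `η` of `Y` given `X`, while the law of `X`
on `{S = 1}` (resp. `{S = 0}`) has density proportional to `e` (resp. `1 - e`) with respect to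
the law of `X`. So in either domain the law of `(X, Y)` is the common measure `P_X ⊗ η`
reweighted by a function of `e(x)`, and reweighting by a function of the conditioning variable
does not change a conditional distribution: in both domains the law of `(X, Y)` given `e(X)` is
that of `P_X ⊗ η`. Positivity of `e` and `1 - e` lets these almost-everywhere statements be read
under the law of `e(X)` on the whole population.
-/

open MeasureTheory ProbabilityTheory
open scoped ENNReal

section

variable {α β γ : Type*} {mα : MeasurableSpace α} {mβ : MeasurableSpace β}
  {mγ : MeasurableSpace γ}

lemma map_withDensity_comp (μ : Measure α) {g : α → β} (hg : Measurable g) {f : β → ℝ≥0∞}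
    (hf : Measurable f) :
    (μ.withDensity (f ∘ g)).map g = (μ.map g).withDensity f := by
  ext A hA
  rw [Measure.map_apply hg hA, withDensity_apply _ (hg hA), withDensity_apply _ hA,
    setLIntegral_map hA hf hg, Function.comp_def]

lemma withDensity_compProd_left (μ : Measure α) [SFinite μ] (κ : Kernel α β)
    [IsSFiniteKernel κ] {f : α → ℝ≥0∞} (hf : Measurable f) :
    μ.withDensity f ⊗ₘ κ = (μ ⊗ₘ κ).withDensity (f ∘ Prod.fst) := by
  ext s hs
  have hsection (a : α) : ∫⁻ b, s.indicator (f ∘ Prod.fst) (a, b) ∂κ a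
      = f a * κ a (Prod.mk a ⁻¹' s) := by
    rw [← lintegral_indicator_const (measurable_prodMk_left hs)]
    rfl
  rw [Measure.compProd_apply hs, withDensity_apply _ hs, ← lintegral_indicator hs,
    Measure.lintegral_compProd ((hf.comp measurable_fst).indicator hs),
    lintegral_withDensity_eq_lintegral_mul _ hf (Kernel.measurable_kernel_prodMk_left hs)]
  simp only [hsection, Pi.mul_apply]

lemma condExp_indicator_one_compl (μ : Measure α) [IsFiniteMeasure μ] {m : MeasurableSpace α}
    (hm : m ≤ mα) {s : Set α} (hs : MeasurableSet[mα] s) :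
    μ[sᶜ.indicator 1 | m] =ᵐ[μ] 1 - μ[s.indicator (1 : α → ℝ) | m] := by
  have hint : Integrable (s.indicator (1 : α → ℝ)) μ := (integrable_const 1).indicator hs
  rw [Set.indicator_compl]
  refine (condExp_sub (integrable_const 1) hint m).trans ?_
  rw [Pi.one_def, condExp_const hm]

lemma map_cond_eq_withDensity (μ : Measure α) [IsFiniteMeasure μ] {X : α → β}
    (hX : Measurable X) {s : Set α} (hs : MeasurableSet s) {g : β → ℝ} (hg : Measurable g)
    (hgs : (fun a => g (X a)) =ᵐ[μ] μ[s.indicator 1 | mβ.comap X]) :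
    (μ[|s]).map X = (μ.map X).withDensity (fun x => (μ s)⁻¹ * ENNReal.ofReal (g x)) := by
  ext A hA
  have hXA : MeasurableSet (X ⁻¹' A) := hX hA
  have hint : Integrable (s.indicator (1 : α → ℝ)) μ := (integrable_const 1).indicator hs
  have hgX : Integrable (fun a => g (X a)) μ := integrable_condExp.congr hgs.symm
  have hg0 : 0 ≤ᵐ[μ] fun a => g (X a) := by
    have hind : 0 ≤ᵐ[μ] s.indicator (1 : α → ℝ) :=
      ae_of_all _ (Set.indicator_nonneg fun _ _ => zero_le_one)
    filter_upwards [condExp_nonneg (m := mβ.comap X) hind, hgs] with a h0 h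
    rwa [h]
  have hmass : μ (s ∩ X ⁻¹' A) = ∫⁻ a in X ⁻¹' A, ENNReal.ofReal (g (X a)) ∂μ := by
    rw [← ofReal_integral_eq_lintegral_ofReal hgX.restrict (ae_restrict_of_ae hg0),
      setIntegral_congr_ae hXA (hgs.mono fun _ h _ => h),
      setIntegral_condExp hX.comap_le hint ⟨A, hA, rfl⟩, integral_indicator_one hs,
      measureReal_restrict_apply hs, ofReal_measureReal]
  rw [Measure.map_apply hX hA, cond_apply hs, withDensity_apply _ hA,
    setLIntegral_map hA (by fun_prop) hX, lintegral_const_mul _ (by fun_prop), hmass]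

lemma condDistrib_ae_eq_of_eq_withDensity_comp [StandardBorelSpace β] [Nonempty β]
    {μ ν : Measure α} [IsFiniteMeasure μ] [IsFiniteMeasure ν] {Z : α → β} {W : α → γ}
    (hZ : Measurable Z) (hW : Measurable W) {f : γ → ℝ≥0∞} (hf : Measurable f)
    (hν : ν = μ.withDensity (f ∘ W)) :
    condDistrib Z W ν =ᵐ[ν.map W] condDistrib Z W μ := by
  subst hν
  refine condDistrib_ae_eq_of_measure_eq_compProd W hZ.aemeasurable ?_
  calc (μ.withDensity (f ∘ W)).map (fun a => (W a, Z a))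
      = (μ.withDensity ((f ∘ Prod.fst) ∘ fun a => (W a, Z a))).map (fun a => (W a, Z a)) :=
        rfl
    _ = (μ.map W ⊗ₘ condDistrib Z W μ).withDensity (f ∘ Prod.fst) := by
      rw [map_withDensity_comp μ (hW.prodMk hZ) (hf.comp measurable_fst),
        compProd_map_condDistrib hZ.aemeasurable]
    _ = (μ.withDensity (f ∘ W)).map W ⊗ₘ condDistrib Z W μ := by
      rw [map_withDensity_comp μ hW hf, withDensity_compProd_left _ _ hf]

lemma condDistrib_comp_ae_eq_of_map_eq_withDensity {Ω : Type*} {mΩ : MeasurableSpace Ω}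
    [StandardBorelSpace β] [Nonempty β] (ν : Measure Ω) [IsFiniteMeasure ν] (μ : Measure β)
    [IsFiniteMeasure μ] {Z : Ω → β} (hZ : Measurable Z) {w : β → γ} (hw : Measurable w)
    {f : γ → ℝ≥0∞} (hf : Measurable f) (hν : ν.map Z = μ.withDensity (f ∘ w)) :
    condDistrib Z (w ∘ Z) ν =ᵐ[ν.map (w ∘ Z)] condDistrib id w μ := by
  have hreweight := condDistrib_ae_eq_of_eq_withDensity_comp measurable_id hw hf hν
  rw [Measure.map_map hw hZ] at hreweight
  exact (condDistrib_map hw.aemeasurable measurable_id.aemeasurable hZ.aemeasurable).symm.trans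
    hreweight

lemma condDistrib_cond_ae_eq_compProd {δ : Type*} {mδ : MeasurableSpace δ}
    [StandardBorelSpace β] [Nonempty β] [StandardBorelSpace δ] [Nonempty δ]
    (μ : Measure α) [IsFiniteMeasure μ] {X : α → β} {Y : α → δ} (hX : Measurable X)
    (hY : Measurable Y) {s : Set α} (hs : MeasurableSet s) {e : β → γ} (he : Measurable e)
    {h : γ → ℝ} (hh : Measurable h)
    (hprop : (fun a => h (e (X a))) =ᵐ[μ] μ[s.indicator 1 | mβ.comap X])
    (hpos : ∀ᵐ a ∂μ, 0 < h (e (X a))) (η : Kernel β δ) [IsFiniteKernel η]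
    (hη : condDistrib Y X (μ[|s]) =ᵐ[μ.map X] η) :
    condDistrib (fun a => (X a, Y a)) (fun a => e (X a)) (μ[|s]) =ᵐ[μ.map (fun a => e (X a))]
      condDistrib id (e ∘ Prod.fst) (μ.map X ⊗ₘ η) := by
  set d : γ → ℝ≥0∞ := fun t => (μ s)⁻¹ * ENNReal.ofReal (h t)
  have hd : Measurable d := by fun_prop
  have hXs : (μ[|s]).map X = (μ.map X).withDensity (d ∘ e) :=
    map_cond_eq_withDensity μ hX hs (hh.comp he) hprop
  have hd_ne_zero : ∀ᵐ x ∂μ.map X, d (e x) ≠ 0 := by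
    refine (ae_map_iff hX.aemeasurable ((hd.comp he) (measurableSet_singleton 0).compl)).2 ?_
    filter_upwards [hpos] with a ha
    exact mul_ne_zero (ENNReal.inv_ne_zero.2 (measure_ne_top μ s)) (ENNReal.ofReal_pos.2 ha).ne'
  have hac : μ.map X ≪ (μ[|s]).map X :=
    hXs ▸ withDensity_absolutelyContinuous' (by fun_prop) hd_ne_zero
  have hZs : (μ[|s]).map (fun a => (X a, Y a))
      = (μ.map X ⊗ₘ η).withDensity (d ∘ e ∘ Prod.fst) := by
    rw [← compProd_map_condDistrib hY.aemeasurable,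
      Measure.compProd_congr (((cond_absolutelyContinuous).map hX).ae_le hη), hXs,
      withDensity_compProd_left _ _ (hd.comp he)]
    rfl
  have hcond := condDistrib_comp_ae_eq_of_map_eq_withDensity (μ[|s]) (μ.map X ⊗ₘ η)
    (hX.prodMk hY) (he.comp measurable_fst) hd hZs
  have hac_e := hac.map he
  rw [Measure.map_map he hX, Measure.map_map he hX] at hac_e
  exact hac_e.ae_le hcond

end

theorem stratlearn_prop1_general
    {Ω 𝓧 𝓨 : Type*} [MeasurableSpace Ω]
    [MeasurableSpace 𝓧] [StandardBorelSpace 𝓧] [Nonempty 𝓧]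
    [MeasurableSpace 𝓨] [StandardBorelSpace 𝓨] [Nonempty 𝓨]
    (P : Measure Ω) [IsProbabilityMeasure P]
    (X : Ω → 𝓧) (Y : Ω → 𝓨) (S : Ω → Bool)
    (hX : Measurable X) (hY : Measurable Y) (hS : Measurable S)
    (e : 𝓧 → ℝ) (he : Measurable e)
    -- e(X) is a version of the propensity score P(S = 1 | X)
    (hePS : (fun ω => e (X ω)) =ᵐ[P]
      P[(fun ω => if S ω then (1 : ℝ) else 0) | MeasurableSpace.comap X inferInstance])
    -- 0 < e(X) < 1 almost surely
    (he01 : ∀ᵐ ω ∂P, e (X ω) ∈ Set.Ioo (0 : ℝ) 1)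
    -- covariate shift: the conditional law of Y given X is the same on {S=1} and {S=0}
    (hCS : ∀ᵐ x ∂(P.map X),
      condDistrib Y X (P[|{ω | S ω = true}]) x = condDistrib Y X (P[|{ω | S ω = false}]) x) :
    -- conclusion: the conditional joint law of (X, Y) given e(X) is the same
    -- in the source and target domains
    ∀ᵐ t ∂(P.map (fun ω => e (X ω))),
      condDistrib (fun ω => (X ω, Y ω)) (fun ω => e (X ω)) (P[|{ω | S ω = true}]) t
        = condDistrib (fun ω => (X ω, Y ω)) (fun ω => e (X ω)) (P[|{ω | S ω = false}]) t := by
  set s := {ω | S ω = true}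
  have hs : MeasurableSet s := hS (measurableSet_singleton true)
  have hs_compl : {ω | S ω = false} = sᶜ := by ext; simp [s]
  have hprop : (fun ω => e (X ω)) =ᵐ[P]
      P[s.indicator 1 | MeasurableSpace.comap X inferInstance] := by
    convert hePS using 3 with ω
    by_cases h : S ω <;> simp [s, h]
  have hprop_compl : (fun ω => 1 - e (X ω)) =ᵐ[P]
      P[sᶜ.indicator 1 | MeasurableSpace.comap X inferInstance] := by
    filter_upwards [hprop, condExp_indicator_one_compl P hX.comap_le hs] with ω h h_compl
    rw [h_compl, Pi.sub_apply, h, Pi.one_apply]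
  rw [hs_compl] at hCS ⊢
  have h_source := condDistrib_cond_ae_eq_compProd P hX hY hs he measurable_id hprop
    (he01.mono fun _ h => h.1) _ (ae_of_all _ fun _ => rfl)
  have h_target := condDistrib_cond_ae_eq_compProd P hX hY hs.compl he
    (measurable_const.sub measurable_id) hprop_compl (he01.mono fun _ h => sub_pos.2 h.2) _
    (hCS.mono fun _ h => h.symm)
  filter_upwards [h_source, h_target] with t h1 h0 using h1.trans h0.symm

/-- Proposition 1 (learning conditional on the propensity score): under covariate shift
(`p_S(y|x) = p_T(y|x)`) and `0 < e(X) < 1` a.s., the conditional joint distribution of `(X, Y)`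
given the propensity score `e(X)` is the same in the source (`S = 1`) and target (`S = 0`)
domains. -/
theorem stratlearn_prop1
    {Ω 𝓧 𝓨 : Type*} [MeasurableSpace Ω]
    [MeasurableSpace 𝓧] [StandardBorelSpace 𝓧] [Nonempty 𝓧]
    [MeasurableSpace 𝓨] [StandardBorelSpace 𝓨] [Nonempty 𝓨]
    (P : Measure Ω) [IsProbabilityMeasure P]
    (X : Ω → 𝓧) (Y : Ω → 𝓨) (S : Ω → Bool)
    (hX : Measurable X) (hY : Measurable Y) (hS : Measurable S)
    (hS1 : P {ω | S ω = true} ≠ 0) (hS0 : P {ω | S ω = false} ≠ 0)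
    (e : 𝓧 → ℝ) (he : Measurable e)
    -- e(X) is a version of the propensity score P(S = 1 | X)
    (hePS : (fun ω => e (X ω)) =ᵐ[P]
      P[(fun ω => if S ω then (1 : ℝ) else 0) | MeasurableSpace.comap X inferInstance])
    -- 0 < e(X) < 1 almost surely
    (he01 : ∀ᵐ ω ∂P, e (X ω) ∈ Set.Ioo (0 : ℝ) 1)
    -- covariate shift: the conditional law of Y given X is the same on {S=1} and {S=0}
    (hCS : ∀ᵐ x ∂(P.map X),
      condDistrib Y X (P[|{ω | S ω = true}]) x = condDistrib Y X (P[|{ω | S ω = false}]) x) :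
    -- conclusion: the conditional joint law of (X, Y) given e(X) is the same
    -- in the source and target domains
    ∀ᵐ t ∂(P.map (fun ω => e (X ω))),
      condDistrib (fun ω => (X ω, Y ω)) (fun ω => e (X ω)) (P[|{ω | S ω = true}]) t
        = condDistrib (fun ω => (X ω, Y ω)) (fun ω => e (X ω)) (P[|{ω | S ω = false}]) t :=
  stratlearn_prop1_general P X Y S hX hY hS e he hePS he01 hCS
end

section
/- (Rosenbaum–Rubin balancing property) Let X be a random variable and S a binary indicator with propensity score e(X) := P(S = 1 | X) satisfying 0 < e(X) < 1 a.s. Then X is conditionally independent of S given e(X); equivalently, P(S = 1 | X, e(X)) = P(S = 1 | e(X)) almost surely. -/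
/-!
If `E[1_B | m₁]` is already `m`-measurable for some `m ≤ m₁`, then for `A ∈ m₁` the tower property
and pulling out known factors give
`E[1_{A ∩ B} | m] = E[1_A E[1_B | m₁] | m] = E[1_A | m] E[1_B | m₁] = E[1_A | m] E[1_B | m]`,
so `m₁` is conditionally independent of `σ(B)` given `m`. For the balancing property take
`m₁ = σ(X)`, `m = σ(e(X))` and `B = {S = true}`, which generates `σ(S)`: here `E[1_B | σ(X)] = e(X)`.
-/

open MeasureTheory ProbabilityTheory

namespace ProbabilityTheory

variable {Ω : Type*} {m m₁ mΩ : MeasurableSpace Ω} {μ : Measure Ω} [IsFiniteMeasure μ]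

theorem condExp_inter_ae_eq_mul_of_aestronglyMeasurable_condExp (hm : m ≤ m₁) (hm₁ : m₁ ≤ mΩ)
    {A B : Set Ω} (hA : MeasurableSet[m₁] A) (hB : MeasurableSet B)
    (hBm : AEStronglyMeasurable[m] (μ⟦B | m₁⟧) μ) :
    μ⟦A ∩ B | m⟧ =ᵐ[μ] μ⟦A | m⟧ * μ⟦B | m⟧ := by
  have hAi : Integrable (A.indicator fun _ ↦ (1 : ℝ)) μ :=
    (integrable_const 1).indicator (hm₁ _ hA)
  have hBi : Integrable (B.indicator fun _ ↦ (1 : ℝ)) μ := (integrable_const 1).indicator hB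
  have hB_eq : μ⟦B | m⟧ =ᵐ[μ] μ⟦B | m₁⟧ :=
    (condExp_condExp_of_le hm hm₁).symm.trans
      (condExp_of_aestronglyMeasurable' (hm.trans hm₁) hBm integrable_condExp)
  have hAB : μ⟦A ∩ B | m₁⟧ =ᵐ[μ] (A.indicator fun _ ↦ (1 : ℝ)) * μ⟦B | m₁⟧ := by
    rw [show (fun _ : Ω ↦ (1 : ℝ)) = 1 from rfl, Set.inter_indicator_one]
    refine condExp_mul_of_stronglyMeasurable_left (stronglyMeasurable_const.indicator hA) ?_ hBi
    rw [← Set.inter_indicator_one]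
    exact (integrable_const 1).indicator ((hm₁ _ hA).inter hB)
  calc μ⟦A ∩ B | m⟧ =ᵐ[μ] μ[μ⟦A ∩ B | m₁⟧ | m] := (condExp_condExp_of_le hm hm₁).symm
    _ =ᵐ[μ] μ[(A.indicator fun _ ↦ (1 : ℝ)) * μ⟦B | m₁⟧ | m] := condExp_congr_ae hAB
    _ =ᵐ[μ] μ⟦A | m⟧ * μ⟦B | m₁⟧ := by
      refine condExp_mul_of_aestronglyMeasurable_right hBm ?_ hAi
      have : (A.indicator fun _ ↦ (1 : ℝ)) * μ⟦B | m₁⟧ = A.indicator (μ⟦B | m₁⟧) :=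
        funext fun ω ↦ by simp only [Pi.mul_apply, ← Set.indicator_mul_left, one_mul]
      exact this ▸ integrable_condExp.indicator (hm₁ _ hA)
    _ =ᵐ[μ] μ⟦A | m⟧ * μ⟦B | m⟧ := by
      filter_upwards [hB_eq] with ω hω
      simp [hω]

theorem condIndep_generateFrom_singleton_of_aestronglyMeasurable_condExp [StandardBorelSpace Ω]
    (hm : m ≤ m₁) (hm₁ : m₁ ≤ mΩ) {B : Set Ω} (hB : MeasurableSet B)
    (hBm : AEStronglyMeasurable[m] (μ⟦B | m₁⟧) μ) :
    CondIndep m m₁ (MeasurableSpace.generateFrom {B}) (hm.trans hm₁) μ := by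
  refine CondIndepSets.condIndep hm₁ (MeasurableSpace.generateFrom_singleton_le hB)
    (@MeasurableSpace.isPiSystem_measurableSet _ m₁) (IsPiSystem.singleton B)
    (@MeasurableSpace.generateFrom_measurableSet _ m₁).symm rfl ?_
  refine (condIndepSets_iff _ _ _ _ (fun A hA ↦ hm₁ _ hA) (by simpa using hB) μ).2 ?_
  rintro A _ hA rfl
  exact condExp_inter_ae_eq_mul_of_aestronglyMeasurable_condExp hm hm₁ hA hB hBm

end ProbabilityTheory

theorem MeasurableSpace.comap_bool_eq_generateFrom {α : Type*} (f : α → Bool) :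
    MeasurableSpace.comap f inferInstance = MeasurableSpace.generateFrom {f ⁻¹' {true}} :=
  le_antisymm
    (@measurable_to_bool _ (generateFrom _) f
      (measurableSet_generateFrom (Set.mem_singleton _))).comap_le
    (generateFrom_le fun _ h ↦ h ▸ ⟨{true}, trivial, rfl⟩)

theorem balancing_property_general
    {Ω 𝓧 : Type*} [MeasurableSpace Ω] [StandardBorelSpace Ω]
    [MeasurableSpace 𝓧]
    (P : Measure Ω) [IsProbabilityMeasure P]
    (X : Ω → 𝓧) (S : Ω → Bool)
    (hX : Measurable X) (hS : Measurable S)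
    (e : 𝓧 → ℝ) (he : Measurable e)
    -- e(X) is a version of the propensity score P(S = 1 | X)
    (hePS : (fun ω => e (X ω)) =ᵐ[P]
      P[(fun ω => if S ω then (1 : ℝ) else 0) | MeasurableSpace.comap X inferInstance]) :
    -- X ⫫ S ∣ e(X)
    CondIndepFun (MeasurableSpace.comap (fun ω => e (X ω)) inferInstance)
      (Measurable.comap_le (he.comp hX)) X S P := by
  have hindicator :
      ((S ⁻¹' {true}).indicator fun _ ↦ (1 : ℝ)) = fun ω ↦ if S ω then 1 else 0 := by
    ext ω; cases h : S ω <;> simp [h]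
  rw [condIndepFun_iff_condIndep, MeasurableSpace.comap_bool_eq_generateFrom]
  refine condIndep_generateFrom_singleton_of_aestronglyMeasurable_condExp
    (he.comp (comap_measurable X)).comap_le hX.comap_le
    (hS (measurableSet_singleton true)) ?_
  rw [hindicator]
  exact (comap_measurable _).aestronglyMeasurable.congr hePS

/-- Rosenbaum–Rubin balancing property (Theorem 1 of Rosenbaum & Rubin 1983): if
`e(X) = P(S = 1 | X)` satisfies `0 < e(X) < 1` a.s., then `X` is conditionally independent of
the binary indicator `S` given the propensity score `e(X)`. -/
theorem balancing_property
    {Ω 𝓧 : Type*} [MeasurableSpace Ω] [StandardBorelSpace Ω] [Nonempty Ω]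
    [MeasurableSpace 𝓧]
    (P : Measure Ω) [IsProbabilityMeasure P]
    (X : Ω → 𝓧) (S : Ω → Bool)
    (hX : Measurable X) (hS : Measurable S)
    (e : 𝓧 → ℝ) (he : Measurable e)
    -- e(X) is a version of the propensity score P(S = 1 | X)
    (hePS : (fun ω => e (X ω)) =ᵐ[P]
      P[(fun ω => if S ω then (1 : ℝ) else 0) | MeasurableSpace.comap X inferInstance])
    -- 0 < e(X) < 1 almost surely
    (he01 : ∀ᵐ ω ∂P, e (X ω) ∈ Set.Ioo (0 : ℝ) 1) :
    -- X ⫫ S ∣ e(X)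
    CondIndepFun (MeasurableSpace.comap (fun ω => e (X ω)) inferInstance)
      (Measurable.comap_le (he.comp hX)) X S P :=
  balancing_property_general P X S hX hS e he hePS
end

section
/- Let b(X) be any measurable function of X such that X is conditionally independent of S given b(X) (i.e., b is a balancing score). Then the propensity score e(X) = P(S=1|X) is a measurable function of b(X) (up to almost-sure equality). -/
open MeasureTheory ProbabilityTheory

/-!
If `X ⫫ S ∣ b(X)`, conditioning the event `{S = 1}` on `X` gives the same result as conditioning
it on the coarser `b(X)`: for `B ∈ σ(X)`, conditional independence and the pull-out property give
`∫_B P(S = 1 | b(X)) = E[P(B | b(X)) P(S = 1 | b(X))] = P(B ∩ {S = 1})`, which characterises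
`P(S = 1 | X)`. Being `σ(b(X))`-measurable, `P(S = 1 | b(X))` factors through `b(X)` by the
Doob–Dynkin lemma.
-/

section CondIndep

variable {Ω : Type*} {m' m₁ m₂ mΩ : MeasurableSpace Ω} [StandardBorelSpace Ω]
  {μ : Measure Ω} [IsFiniteMeasure μ] {hm' : m' ≤ mΩ}

theorem setIntegral_condExp_indicator_of_condIndep (hm₁ : m₁ ≤ mΩ) (hm₂ : m₂ ≤ mΩ)
    (h : CondIndep m' m₁ m₂ hm' μ) {s t : Set Ω} (hs : MeasurableSet[m₁] s)
    (ht : MeasurableSet[m₂] t) :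
    ∫ ω in s, (μ⟦t | m'⟧) ω ∂μ = μ.real (s ∩ t) := by
  have h_mul : s.indicator (fun _ => (1 : ℝ)) * μ⟦t | m'⟧ = s.indicator (μ⟦t | m'⟧) := by
    ext ω
    simp only [Pi.mul_apply, ← Set.indicator_mul_left, one_mul]
  have h_int : Integrable (s.indicator (fun _ => (1 : ℝ)) * μ⟦t | m'⟧) μ :=
    h_mul ▸ integrable_condExp.indicator (hm₁ s hs)
  calc ∫ ω in s, (μ⟦t | m'⟧) ω ∂μ
      = ∫ ω, (s.indicator (fun _ => (1 : ℝ)) * μ⟦t | m'⟧) ω ∂μ := by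
        rw [h_mul, integral_indicator (hm₁ s hs)]
    _ = ∫ ω, (μ⟦s | m'⟧ * μ⟦t | m'⟧) ω ∂μ := by
        rw [← integral_condExp hm']
        exact integral_congr_ae (condExp_mul_of_stronglyMeasurable_right
          stronglyMeasurable_condExp h_int
          ((integrable_const 1).indicator (hm₁ s hs)))
    _ = ∫ ω, (μ⟦s ∩ t | m'⟧) ω ∂μ :=
        integral_congr_ae ((condIndep_iff _ _ _ hm' hm₁ hm₂ μ).mp h s t hs ht).symm
    _ = μ.real (s ∩ t) := by
        rw [integral_condExp hm', integral_indicator ((hm₁ s hs).inter (hm₂ t ht)),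
          setIntegral_const, smul_eq_mul, mul_one]

theorem condExp_indicator_eq_of_condIndep_of_le (hle : m' ≤ m₁) (hm₁ : m₁ ≤ mΩ) (hm₂ : m₂ ≤ mΩ)
    (h : CondIndep m' m₁ m₂ hm' μ) {t : Set Ω} (ht : MeasurableSet[m₂] t) :
    μ⟦t | m₁⟧ =ᵐ[μ] μ⟦t | m'⟧ := by
  refine (ae_eq_condExp_of_forall_setIntegral_eq hm₁ ((integrable_const 1).indicator (hm₂ t ht))
    (fun s _ _ => integrable_condExp.integrableOn) (fun s hs _ => ?_)
    (stronglyMeasurable_condExp.mono hle).aestronglyMeasurable).symm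
  rw [setIntegral_condExp_indicator_of_condIndep hm₁ hm₂ h hs ht,
    setIntegral_indicator (hm₂ t ht), setIntegral_const, smul_eq_mul, mul_one]

end CondIndep

theorem propensity_coarsest_balancing_score_general
    {Ω 𝓧 𝓑 : Type*} [MeasurableSpace Ω] [StandardBorelSpace Ω]
    [MeasurableSpace 𝓧] [MeasurableSpace 𝓑]
    (P : Measure Ω) [IsProbabilityMeasure P]
    (X : Ω → 𝓧) (S : Ω → Bool)
    (hX : Measurable X) (hS : Measurable S)
    (e : 𝓧 → ℝ)
    -- e(X) is a version of the propensity score P(S = 1 | X)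
    (hePS : (fun ω => e (X ω)) =ᵐ[P]
      P[(fun ω => if S ω then (1 : ℝ) else 0) | MeasurableSpace.comap X inferInstance])
    -- b is a measurable function of X which is a balancing score: X ⫫ S ∣ b(X)
    (b : 𝓧 → 𝓑) (hb : Measurable b)
    (hbal : CondIndepFun (MeasurableSpace.comap (fun ω => b (X ω)) inferInstance)
      (Measurable.comap_le ((hb.comp hX))) X S P) :
    -- the propensity score is a measurable function of b(X), up to a.s. equality
    ∃ g : 𝓑 → ℝ, Measurable g ∧ (fun ω => e (X ω)) =ᵐ[P] fun ω => g (b (X ω)) := by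
  set A := S ⁻¹' {true}
  set σb := MeasurableSpace.comap (fun ω => b (X ω)) (inferInstance : MeasurableSpace 𝓑)
  have h_ind : (fun ω => if S ω then (1 : ℝ) else 0) = A.indicator fun _ => 1 := by
    ext ω
    by_cases hω : S ω <;> simp [A, hω]
  have h_le : σb ≤ MeasurableSpace.comap X inferInstance :=
    (hb.comp (comap_measurable X)).comap_le
  have h_coarsen : P⟦A | MeasurableSpace.comap X inferInstance⟧ =ᵐ[P] P⟦A | σb⟧ :=
    condExp_indicator_eq_of_condIndep_of_le h_le hX.comap_le hS.comap_le
      ((condIndepFun_iff_condIndep _ _ _ _ _).mp hbal) ⟨{true}, measurableSet_singleton true, rfl⟩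
  have h_meas : StronglyMeasurable[σb] (P⟦A | σb⟧) := stronglyMeasurable_condExp
  obtain ⟨g, hg, hg_eq⟩ := h_meas.exists_eq_measurable_comp
  refine ⟨g, hg.measurable, ?_⟩
  rw [h_ind] at hePS
  exact hePS.trans (h_coarsen.trans (Filter.EventuallyEq.of_eq hg_eq))

/-- The propensity score is the coarsest balancing score: if `b(X)` is a balancing score,
i.e. `X ⫫ S ∣ b(X)`, then the propensity score `e(X) = P(S = 1 | X)` is (up to almost-sure
equality) a measurable function of `b(X)`. -/
theorem propensity_coarsest_balancing_score
    {Ω 𝓧 𝓑 : Type*} [MeasurableSpace Ω] [StandardBorelSpace Ω] [Nonempty Ω]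
    [MeasurableSpace 𝓧] [MeasurableSpace 𝓑]
    (P : Measure Ω) [IsProbabilityMeasure P]
    (X : Ω → 𝓧) (S : Ω → Bool)
    (hX : Measurable X) (hS : Measurable S)
    (e : 𝓧 → ℝ) (he : Measurable e)
    -- e(X) is a version of the propensity score P(S = 1 | X)
    (hePS : (fun ω => e (X ω)) =ᵐ[P]
      P[(fun ω => if S ω then (1 : ℝ) else 0) | MeasurableSpace.comap X inferInstance])
    -- b is a measurable function of X which is a balancing score: X ⫫ S ∣ b(X)
    (b : 𝓧 → 𝓑) (hb : Measurable b)
    (hbal : CondIndepFun (MeasurableSpace.comap (fun ω => b (X ω)) inferInstance)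
      (Measurable.comap_le ((hb.comp hX))) X S P) :
    -- the propensity score is a measurable function of b(X), up to a.s. equality
    ∃ g : 𝓑 → ℝ, Measurable g ∧ (fun ω => e (X ω)) =ᵐ[P] fun ω => g (b (X ω)) :=
  propensity_coarsest_balancing_score_general P X S hX hS e hePS b hb hbal
end

section
/- (Zadrozny selection identity) Let (X, Y, S) be random variables on X × Y × {0,1} drawn from distribution D with P(S=1 | X, Y) = P(S=1 | X) > 0 almost surely. Define the reweighted distribution D̂(x, y, s) := (P(S=1)/P(S=1|x)) · D(x, y, s). Then for every measurable classifier f and loss ℓ, E_D[ℓ(f(X), Y)] = E_{D̂}[ℓ(f(X), Y) | S = 1]. -/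
/-!
On the σ-algebra generated by `(X, Y)`, the selected part `P.restrict {S = 1}` of `P` has density
`e(X) = P(S = 1 | X, Y)` with respect to `P`: this is the defining property of the conditional
expectation, read off on sets and extended to nonnegative functions. Reweighting the selected data
by `P(S = 1) / e(X)` therefore cancels this density up to the constant `P(S = 1)`, which is exactly
the normalisation of the conditional measure given `S = 1`.
-/

open MeasureTheory ProbabilityTheory
open scoped ENNReal

namespace MeasureTheory

variable {Ω : Type*} {m m0 : MeasurableSpace Ω} {μ : Measure Ω}

theorem lintegral_ofReal_condExp_mul (hm : m ≤ m0) [SigmaFinite (μ.trim hm)] {f : Ω → ℝ}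
    (hf : Integrable f μ) (hf_nonneg : 0 ≤ᵐ[μ] f) {h : Ω → ℝ≥0∞} (hh : Measurable[m] h) :
    ∫⁻ ω, ENNReal.ofReal (μ[f | m] ω) * h ω ∂μ = ∫⁻ ω, ENNReal.ofReal (f ω) * h ω ∂μ := by
  have hf_meas : AEMeasurable (fun ω => ENNReal.ofReal (f ω)) μ :=
    hf.aemeasurable.ennreal_ofReal
  have hcond_meas : AEMeasurable (fun ω => ENNReal.ofReal (μ[f | m] ω)) μ :=
    (stronglyMeasurable_condExp.mono hm).measurable.ennreal_ofReal.aemeasurable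
  have h_trim : (μ.withDensity fun ω => ENNReal.ofReal (μ[f | m] ω)).trim hm
      = (μ.withDensity fun ω => ENNReal.ofReal (f ω)).trim hm := by
    refine @Measure.ext _ m _ _ fun s hs => ?_
    rw [trim_measurableSet_eq hm hs, trim_measurableSet_eq hm hs,
      withDensity_apply _ (hm s hs), withDensity_apply _ (hm s hs),
      ← ofReal_integral_eq_lintegral_ofReal integrable_condExp.restrict
        (ae_restrict_of_ae (condExp_nonneg hf_nonneg)),
      ← ofReal_integral_eq_lintegral_ofReal hf.restrict (ae_restrict_of_ae hf_nonneg),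
      setIntegral_condExp hm hf hs]
  calc ∫⁻ ω, ENNReal.ofReal (μ[f | m] ω) * h ω ∂μ
      = ∫⁻ ω, h ω ∂(μ.withDensity fun ω => ENNReal.ofReal (μ[f | m] ω)) :=
        (lintegral_withDensity_eq_lintegral_mul₀ hcond_meas (hh.mono hm le_rfl).aemeasurable).symm
    _ = ∫⁻ ω, h ω ∂(μ.withDensity fun ω => ENNReal.ofReal (f ω)) := by
        rw [← lintegral_trim hm hh, h_trim, lintegral_trim hm hh]
    _ = ∫⁻ ω, ENNReal.ofReal (f ω) * h ω ∂μ :=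
        lintegral_withDensity_eq_lintegral_mul₀ hf_meas (hh.mono hm le_rfl).aemeasurable

theorem setLIntegral_eq_lintegral_condExp_indicator_mul (hm : m ≤ m0) [IsFiniteMeasure μ]
    {A : Set Ω} (hA : MeasurableSet A) {h : Ω → ℝ≥0∞} (hh : Measurable[m] h) :
    ∫⁻ ω in A, h ω ∂μ = ∫⁻ ω, ENNReal.ofReal (μ[A.indicator 1 | m] ω) * h ω ∂μ := by
  have hind : Integrable (A.indicator 1) μ := (integrable_const (1 : ℝ)).indicator hA
  rw [lintegral_ofReal_condExp_mul hm hind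
    (.of_forall (Set.indicator_nonneg fun _ _ => zero_le_one)) hh, ← lintegral_indicator hA]
  congr 1 with ω
  by_cases hω : ω ∈ A <;> simp [hω]

theorem lintegral_cond_withDensity_inv_condExp_indicator (hm : m ≤ m0)
    [IsProbabilityMeasure μ] {A : Set Ω} (hA : MeasurableSet A) {g : Ω → ℝ}
    (hg_meas : Measurable[m] g) (hg : g =ᵐ[μ] μ[A.indicator 1 | m]) (hg_pos : ∀ᵐ ω ∂μ, 0 < g ω)
    {h : Ω → ℝ≥0∞} (hh : Measurable[m] h) :
    ∫⁻ ω, h ω ∂(μ.withDensity fun ω => μ A / ENNReal.ofReal (g ω))[|A] = ∫⁻ ω, h ω ∂μ := by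
  set w : Ω → ℝ≥0∞ := fun ω => μ A / ENNReal.ofReal (g ω)
  have hw_meas : Measurable[m] w := measurable_const.div hg_meas.ennreal_ofReal
  have hsel : ∀ h : Ω → ℝ≥0∞, Measurable[m] h →
      ∫⁻ ω in A, h ω ∂μ = ∫⁻ ω, ENNReal.ofReal (g ω) * h ω ∂μ := fun h hh => by
    rw [setLIntegral_eq_lintegral_condExp_indicator_mul hm hA hh]
    exact lintegral_congr_ae (hg.mono fun ω hω => by simp only [hω])
  have hrestrict : ∀ h : Ω → ℝ≥0∞, Measurable[m] h →
      ∫⁻ ω, h ω ∂((μ.withDensity w).restrict A) = μ A * ∫⁻ ω, h ω ∂μ := fun h hh => by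
    rw [restrict_withDensity hA, lintegral_withDensity_eq_lintegral_mul _ (hw_meas.mono hm le_rfl)
      (hh.mono hm le_rfl), hsel _ (hw_meas.mul hh), ← lintegral_const_mul' _ _ (measure_ne_top _ _)]
    refine lintegral_congr_ae (hg_pos.mono fun ω hω => ?_)
    change ENNReal.ofReal (g ω) * (w ω * h ω) = μ A * h ω
    rw [← mul_assoc, ENNReal.mul_div_cancel (ENNReal.ofReal_pos.2 hω).ne'
      ENNReal.ofReal_ne_top]
  have hweight_A : μ.withDensity w A = μ A := by
    simpa [Measure.restrict_apply_univ] using hrestrict 1 measurable_const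
  have hA_ne_zero : μ A ≠ 0 := by
    have hμA : μ A = ∫⁻ ω, ENNReal.ofReal (g ω) ∂μ := by simpa using hsel 1 measurable_const
    rw [hμA, Ne, lintegral_eq_zero_iff' (hg_meas.mono hm le_rfl).ennreal_ofReal.aemeasurable]
    intro hg_zero
    obtain ⟨ω, hω0, hωpos⟩ := (hg_zero.and hg_pos).exists
    exact (ENNReal.ofReal_pos.2 hωpos).ne' hω0
  rw [ProbabilityTheory.cond, lintegral_smul_measure, hweight_A, hrestrict h hh, smul_eq_mul,
    ← mul_assoc, ENNReal.inv_mul_cancel hA_ne_zero (measure_ne_top _ _), one_mul]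

end MeasureTheory

theorem zadrozny_selection_identity_general
    {Ω 𝓧 𝓨 γ : Type*} [MeasurableSpace Ω]
    [MeasurableSpace 𝓧] [MeasurableSpace 𝓨]
    (P : Measure Ω) [IsProbabilityMeasure P]
    (X : Ω → 𝓧) (Y : Ω → 𝓨) (S : Ω → Bool)
    (hX : Measurable X) (hY : Measurable Y) (hS : Measurable S)
    (e : 𝓧 → ℝ) (he : Measurable e)
    -- P(S=1 | X, Y) = P(S=1 | X) = e(X): the conditional probability of selection given
    -- both covariates and label is a function of the covariates alone
    (hePS : (fun ω => e (X ω)) =ᵐ[P]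
      P[(fun ω => if S ω then (1 : ℝ) else 0)
        | MeasurableSpace.comap (fun ω => (X ω, Y ω)) inferInstance])
    -- P(S=1 | X) > 0 almost surely
    (hepos : ∀ᵐ ω ∂P, 0 < e (X ω))
    -- a measurable classifier f and nonnegative measurable loss ℓ
    (f : 𝓧 → γ)
    (ℓ : γ → 𝓨 → ℝ≥0∞) (hℓ : Measurable fun p : 𝓧 × 𝓨 => ℓ (f p.1) p.2) :
    -- E_D[ℓ(f(X), Y)] = E_{D̂}[ℓ(f(X), Y) | S = 1], where
    -- D̂ = (P(S=1)/P(S=1|x)) · D is the reweighted distribution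
    ∫⁻ ω, ℓ (f (X ω)) (Y ω) ∂P
      = ∫⁻ ω, ℓ (f (X ω)) (Y ω)
          ∂((P.withDensity
              (fun ω => P {ω' | S ω' = true} / ENNReal.ofReal (e (X ω))))[|{ω | S ω = true}]) := by
  have hZ : Measurable[MeasurableSpace.comap (fun ω => (X ω, Y ω)) inferInstance]
      fun ω => (X ω, Y ω) := comap_measurable _
  have hselect : (fun ω => if S ω then (1 : ℝ) else 0) = {ω | S ω = true}.indicator 1 := by
    ext ω
    simp [Set.indicator_apply]
  rw [hselect] at hePS
  exact (lintegral_cond_withDensity_inv_condExp_indicator (hX.prodMk hY).comap_le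
    (hS (measurableSet_singleton true)) ((he.comp measurable_fst).comp hZ) hePS hepos
    (hℓ.comp hZ)).symm

/-- Zadrozny selection identity (equations (S20)–(S21)): if selection into the source set
depends only on the covariates, `P(S=1 | X, Y) = P(S=1 | X) = e(X) > 0` a.s., then the
population risk equals the conditional risk under the reweighted distribution
`D̂ = (P(S=1)/P(S=1|x)) · D`, given `S = 1`. -/
theorem zadrozny_selection_identity
    {Ω 𝓧 𝓨 γ : Type*} [MeasurableSpace Ω]
    [MeasurableSpace 𝓧] [MeasurableSpace 𝓨] [MeasurableSpace γ]
    (P : Measure Ω) [IsProbabilityMeasure P]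
    (X : Ω → 𝓧) (Y : Ω → 𝓨) (S : Ω → Bool)
    (hX : Measurable X) (hY : Measurable Y) (hS : Measurable S)
    (e : 𝓧 → ℝ) (he : Measurable e)
    -- P(S=1 | X, Y) = P(S=1 | X) = e(X): the conditional probability of selection given
    -- both covariates and label is a function of the covariates alone
    (hePS : (fun ω => e (X ω)) =ᵐ[P]
      P[(fun ω => if S ω then (1 : ℝ) else 0)
        | MeasurableSpace.comap (fun ω => (X ω, Y ω)) inferInstance])
    -- P(S=1 | X) > 0 almost surely
    (hepos : ∀ᵐ ω ∂P, 0 < e (X ω))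
    -- a measurable classifier f and nonnegative measurable loss ℓ
    (f : 𝓧 → γ) (hf : Measurable f)
    (ℓ : γ → 𝓨 → ℝ≥0∞) (hℓ : Measurable fun p : 𝓧 × 𝓨 => ℓ (f p.1) p.2) :
    -- E_D[ℓ(f(X), Y)] = E_{D̂}[ℓ(f(X), Y) | S = 1], where
    -- D̂ = (P(S=1)/P(S=1|x)) · D is the reweighted distribution
    ∫⁻ ω, ℓ (f (X ω)) (Y ω) ∂P
      = ∫⁻ ω, ℓ (f (X ω)) (Y ω)
          ∂((P.withDensity
              (fun ω => P {ω' | S ω' = true} / ENNReal.ofReal (e (X ω))))[|{ω | S ω = true}]) :=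
  zadrozny_selection_identity_general P X Y S hX hY hS e he hePS hepos f ℓ hℓ
end

section
/- Under covariate shift and 0 < e(X) < 1 a.s., the outcome distributions given the propensity score are equal between domains: the conditional law of Y given e(X) on {S=1} equals the conditional law of Y given e(X) on {S=0}; in particular E[Y | e(X), S=1] = E[Y | e(X), S=0] a.s. (for integrable Y). -/
open MeasureTheory ProbabilityTheory
open scoped ENNReal

/-!
Conditioning on `S = 1` (resp. `S = 0`) reweights the law of `X` by the density `c₁ e` (resp.
`c₀ (1 - e)`), a function of `e(X)` alone. With covariate shift, the joint law of `(e(X), Y)` in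
either domain is therefore a reweighting `Q.withDensity (g ∘ Prod.fst)` of one common measure `Q`,
and reweighting by a function of the first coordinate does not change the disintegration
`Q.condKernel`. Since `0 < e(X) < 1`, both weights are positive `e(X)`-a.e., so both conditional
laws agree with `Q.condKernel` there.
-/

namespace MeasureTheory

variable {Ω 𝓧 : Type*} {m m₀ : MeasurableSpace Ω} {μ : Measure Ω} [IsFiniteMeasure μ]
  {A s : Set Ω}

lemma setLIntegral_ofReal_condExp_indicator_one (hm : m ≤ m₀) (hA : MeasurableSet[m₀] A)
    (hs : MeasurableSet[m] s) :
    ∫⁻ ω in s, ENNReal.ofReal (μ[A.indicator 1 | m] ω) ∂μ = μ (A ∩ s) := by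
  have hint : Integrable (A.indicator (1 : Ω → ℝ)) μ :=
    (integrable_const (1 : ℝ)).indicator hA
  have hnonneg : 0 ≤ᵐ[μ] μ[A.indicator (1 : Ω → ℝ) | m] :=
    condExp_nonneg (ae_of_all _ (Set.indicator_nonneg fun _ _ => zero_le_one))
  rw [← ofReal_integral_eq_lintegral_ofReal integrable_condExp.restrict
      (ae_restrict_of_ae hnonneg), setIntegral_condExp hm hint hs, setIntegral_indicator hA]
  simp only [Pi.one_apply]
  rw [setIntegral_const, smul_eq_mul, mul_one, Set.inter_comm, ofReal_measureReal]

lemma condExp_indicator_compl_one (hA : MeasurableSet[m₀] A) (hm : m ≤ m₀) :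
    μ[Aᶜ.indicator (1 : Ω → ℝ) | m] =ᵐ[μ] 1 - μ[A.indicator 1 | m] := by
  rw [Set.indicator_compl]
  filter_upwards [condExp_sub (f := 1) (g := A.indicator 1) (integrable_const (1 : ℝ))
    ((integrable_const (1 : ℝ)).indicator hA) m] with ω hω
  rw [hω, Pi.sub_apply, Pi.sub_apply]
  exact congrArg (· - _) (congrFun (condExp_const hm (1 : ℝ)) ω)

variable [MeasurableSpace 𝓧] {P : Measure Ω} [IsFiniteMeasure P] {X : Ω → 𝓧}

lemma map_cond_eq_withDensity_of_condExp_indicator (hX : Measurable X) (hA : MeasurableSet A)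
    {p : 𝓧 → ℝ} (hp : Measurable p)
    (hpA : (fun ω => p (X ω)) =ᵐ[P] P[A.indicator 1 | MeasurableSpace.comap X inferInstance]) :
    (P[|A]).map X = (P.map X).withDensity (fun x => (P A)⁻¹ * ENNReal.ofReal (p x)) := by
  ext C hC
  rw [Measure.map_apply hX hC, cond_apply hA, withDensity_apply _ hC,
    lintegral_const_mul _ hp.ennreal_ofReal, setLIntegral_map hC hp.ennreal_ofReal hX,
    ← setLIntegral_ofReal_condExp_indicator_one hX.comap_le hA ⟨C, hC, rfl⟩]
  congr 1
  exact setLIntegral_congr_fun_ae (hX hC) (hpA.mono fun ω hω _ => by rw [← hω])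

end MeasureTheory

namespace MeasureTheory.Measure

variable {α β γ : Type*} [MeasurableSpace α] [MeasurableSpace β] [MeasurableSpace γ]

lemma withDensity_map_eq_map_withDensity_comp {μ : Measure α} {f : α → β} (hf : Measurable f)
    {g : β → ℝ≥0∞} (hg : Measurable g) :
    (μ.map f).withDensity g = (μ.withDensity (g ∘ f)).map f := by
  ext s hs
  rw [withDensity_apply _ hs, map_apply hf hs, withDensity_apply _ (hf hs),
    setLIntegral_map hs hg hf, Function.comp_def]

lemma withDensity_compProd_left {μ : Measure α} [SFinite μ] {κ : Kernel α β}
    [IsSFiniteKernel κ] {f : α → ℝ≥0∞} (hf : Measurable f) :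
    μ.withDensity f ⊗ₘ κ = (μ ⊗ₘ κ).withDensity (f ∘ Prod.fst) := by
  ext s hs
  rw [compProd_apply hs, withDensity_apply _ hs, ← lintegral_indicator hs,
    lintegral_compProd ((hf.comp measurable_fst).indicator hs),
    lintegral_withDensity_eq_lintegral_mul _ hf (Kernel.measurable_kernel_prodMk_left hs)]
  refine lintegral_congr fun a => ?_
  rw [Pi.mul_apply, ← lintegral_indicator_const (measurable_prodMk_left hs)]
  rfl

end MeasureTheory.Measure

namespace ProbabilityTheory

open MeasureTheory.Measure

variable {α β γ 𝓧 : Type*} [MeasurableSpace α] [MeasurableSpace β] [MeasurableSpace γ]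
  [MeasurableSpace 𝓧] [StandardBorelSpace γ] [Nonempty γ]

lemma condDistrib_ae_eq_condKernel_of_map_eq_withDensity {μ : Measure α} [IsFiniteMeasure μ]
    {T : α → β} {Y : α → γ} (hY : Measurable Y) {Q : Measure (β × γ)} [IsFiniteMeasure Q]
    {g : β → ℝ≥0∞} (hg : Measurable g)
    (h : μ.map (fun a => (T a, Y a)) = Q.withDensity (g ∘ Prod.fst)) :
    condDistrib Y T μ =ᵐ[Q.fst.withDensity g] Q.condKernel := by
  have hT : μ.map T = Q.fst.withDensity g := by
    rw [← fst_map_prodMk hY, h, Measure.fst, Measure.fst,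
      withDensity_map_eq_map_withDensity_comp measurable_fst hg]
  rw [← hT]
  refine condDistrib_ae_eq_of_measure_eq_compProd T hY.aemeasurable ?_
  rw [h, hT, withDensity_compProd_left hg, disintegrate]

lemma condDistrib_comp_ae_eq_condKernel {μ : Measure α} [IsFiniteMeasure μ]
    {X : α → 𝓧} {Y : α → γ} (hX : Measurable X) (hY : Measurable Y) {e : 𝓧 → β}
    (he : Measurable e) {ν : Measure 𝓧} [IsFiniteMeasure ν] {κ : Kernel 𝓧 γ}
    [IsMarkovKernel κ]
    {g : β → ℝ≥0∞} (hg : Measurable g) (hX_law : μ.map X = ν.withDensity (g ∘ e))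
    (hκ : condDistrib Y X μ =ᵐ[μ.map X] κ) :
    condDistrib Y (e ∘ X) μ =ᵐ[(ν.map e).withDensity g]
      ((ν ⊗ₘ κ).map (Prod.map e id)).condKernel := by
  have hQ : ((ν ⊗ₘ κ).map (Prod.map e id)).fst = ν.map e := by
    rw [Measure.fst, map_map measurable_fst (he.prodMap measurable_id)]
    change (ν ⊗ₘ κ).map (e ∘ Prod.fst) = _
    rw [← map_map he measurable_fst, ← Measure.fst, fst_compProd]
  rw [← hQ]
  refine condDistrib_ae_eq_condKernel_of_map_eq_withDensity hY hg ?_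
  calc μ.map (fun a => (e (X a), Y a))
      = (μ.map (fun a => (X a, Y a))).map (Prod.map e id) :=
        (map_map (he.prodMap measurable_id) (hX.prodMk hY)).symm
    _ = (ν.withDensity (g ∘ e) ⊗ₘ κ).map (Prod.map e id) := by
        rw [← compProd_map_condDistrib hY.aemeasurable, compProd_congr hκ, hX_law]
    _ = ((ν ⊗ₘ κ).map (Prod.map e id)).withDensity (g ∘ Prod.fst) := by
        rw [withDensity_compProd_left (hg.comp he),
          withDensity_map_eq_map_withDensity_comp (he.prodMap measurable_id)
            (hg.comp measurable_fst)]
        rfl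

end ProbabilityTheory

theorem outcome_balance_given_propensity_general
    {Ω 𝓧 : Type*} [MeasurableSpace Ω]
    [MeasurableSpace 𝓧]
    (P : Measure Ω) [IsProbabilityMeasure P]
    (X : Ω → 𝓧) (Y : Ω → ℝ) (S : Ω → Bool)
    (hX : Measurable X) (hY : Measurable Y) (hS : Measurable S)
    (e : 𝓧 → ℝ) (he : Measurable e)
    -- e(X) is a version of the propensity score P(S = 1 | X)
    (hePS : (fun ω => e (X ω)) =ᵐ[P]
      P[(fun ω => if S ω then (1 : ℝ) else 0) | MeasurableSpace.comap X inferInstance])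
    -- 0 < e(X) < 1 almost surely
    (he01 : ∀ᵐ ω ∂P, e (X ω) ∈ Set.Ioo (0 : ℝ) 1)
    -- covariate shift: the conditional law of Y given X is the same on {S=1} and {S=0}
    (hCS : ∀ᵐ x ∂(P.map X),
      condDistrib Y X (P[|{ω | S ω = true}]) x = condDistrib Y X (P[|{ω | S ω = false}]) x) :
    -- conclusion: same conditional law of Y given e(X) in both domains,
    -- and in particular equal conditional means
    (∀ᵐ t ∂(P.map (fun ω => e (X ω))),
        condDistrib Y (fun ω => e (X ω)) (P[|{ω | S ω = true}]) t
          = condDistrib Y (fun ω => e (X ω)) (P[|{ω | S ω = false}]) t)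
    ∧ (∀ᵐ t ∂(P.map (fun ω => e (X ω))),
        (∫ y, y ∂(condDistrib Y (fun ω => e (X ω)) (P[|{ω | S ω = true}]) t))
          = ∫ y, y ∂(condDistrib Y (fun ω => e (X ω)) (P[|{ω | S ω = false}]) t)) := by
  set A := {ω | S ω = true}
  have hA : MeasurableSet A := hS (measurableSet_singleton true)
  have hAc : {ω | S ω = false} = Aᶜ := by ext; simp [A]
  have hind : (fun ω => if S ω then (1 : ℝ) else 0) = A.indicator 1 := by
    ext ω; by_cases h : S ω <;> simp [A, h]
  rw [hind] at hePS
  rw [hAc] at hCS ⊢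
  set g₁ : ℝ → ℝ≥0∞ := fun t => (P A)⁻¹ * ENNReal.ofReal t
  set g₀ : ℝ → ℝ≥0∞ := fun t => (P Aᶜ)⁻¹ * ENNReal.ofReal (1 - t)
  have hg₁ : Measurable g₁ := by fun_prop
  have hg₀ : Measurable g₀ := by fun_prop
  have hlaw₁ : (P[|A]).map X = (P.map X).withDensity (g₁ ∘ e) :=
    map_cond_eq_withDensity_of_condExp_indicator hX hA he hePS
  have hlaw₀ : (P[|Aᶜ]).map X = (P.map X).withDensity (g₀ ∘ e) :=
    map_cond_eq_withDensity_of_condExp_indicator hX hA.compl (measurable_const.sub he)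
      ((condExp_indicator_compl_one hA hX.comap_le).trans (hePS.fun_comp (1 - ·)).symm).symm
  have hCS' : condDistrib Y X (P[|Aᶜ]) =ᵐ[(P[|Aᶜ]).map X] condDistrib Y X (P[|A]) := by
    rw [hlaw₀]
    exact (withDensity_absolutelyContinuous _ _).ae_le (hCS.mono fun x hx => hx.symm)
  have h₁ := condDistrib_comp_ae_eq_condKernel hX hY he hg₁ hlaw₁ Filter.EventuallyEq.rfl
  have h₀ := condDistrib_comp_ae_eq_condKernel hX hY he hg₀ hlaw₀ hCS'
  rw [Measure.map_map he hX] at h₁ h₀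
  have hg_ne_zero : ∀ᵐ t ∂(P.map (e ∘ X)), g₁ t ≠ 0 ∧ g₀ t ≠ 0 := by
    filter_upwards [(ae_map_iff (he.comp hX).aemeasurable measurableSet_Ioo).2 he01]
      with t ⟨ht₀, ht₁⟩
    simp [g₁, g₀, ht₀, ht₁, measure_ne_top]
  have hlaw : ∀ᵐ t ∂(P.map (e ∘ X)), condDistrib Y (e ∘ X) (P[|A]) t
      = condDistrib Y (e ∘ X) (P[|Aᶜ]) t := by
    filter_upwards [(ae_withDensity_iff hg₁).1 h₁, (ae_withDensity_iff hg₀).1 h₀,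
      hg_ne_zero] with t h₁ h₀ hg using (h₁ hg.1).trans (h₀ hg.2).symm
  exact ⟨hlaw, hlaw.mono fun t ht => congrArg (fun ν : Measure ℝ => ∫ y, y ∂ν) ht⟩

/-- Remark 1 (conclusion): under covariate shift and `0 < e(X) < 1` a.s., the conditional law
of the outcome `Y` given the propensity score `e(X)` is the same in the source (`S = 1`) and
target (`S = 0`) domains; in particular the conditional means agree almost surely. -/
theorem outcome_balance_given_propensity
    {Ω 𝓧 : Type*} [MeasurableSpace Ω]
    [MeasurableSpace 𝓧] [StandardBorelSpace 𝓧] [Nonempty 𝓧]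
    (P : Measure Ω) [IsProbabilityMeasure P]
    (X : Ω → 𝓧) (Y : Ω → ℝ) (S : Ω → Bool)
    (hX : Measurable X) (hY : Measurable Y) (hS : Measurable S)
    (hS1 : P {ω | S ω = true} ≠ 0) (hS0 : P {ω | S ω = false} ≠ 0)
    (hYint : Integrable Y P)
    (e : 𝓧 → ℝ) (he : Measurable e)
    -- e(X) is a version of the propensity score P(S = 1 | X)
    (hePS : (fun ω => e (X ω)) =ᵐ[P]
      P[(fun ω => if S ω then (1 : ℝ) else 0) | MeasurableSpace.comap X inferInstance])
    -- 0 < e(X) < 1 almost surely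
    (he01 : ∀ᵐ ω ∂P, e (X ω) ∈ Set.Ioo (0 : ℝ) 1)
    -- covariate shift: the conditional law of Y given X is the same on {S=1} and {S=0}
    (hCS : ∀ᵐ x ∂(P.map X),
      condDistrib Y X (P[|{ω | S ω = true}]) x = condDistrib Y X (P[|{ω | S ω = false}]) x) :
    -- conclusion: same conditional law of Y given e(X) in both domains,
    -- and in particular equal conditional means
    (∀ᵐ t ∂(P.map (fun ω => e (X ω))),
        condDistrib Y (fun ω => e (X ω)) (P[|{ω | S ω = true}]) t
          = condDistrib Y (fun ω => e (X ω)) (P[|{ω | S ω = false}]) t)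
    ∧ (∀ᵐ t ∂(P.map (fun ω => e (X ω))),
        (∫ y, y ∂(condDistrib Y (fun ω => e (X ω)) (P[|{ω | S ω = true}]) t))
          = ∫ y, y ∂(condDistrib Y (fun ω => e (X ω)) (P[|{ω | S ω = false}]) t)) :=
  outcome_balance_given_propensity_general P X Y S hX hY hS e he hePS he01 hCS
end
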